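/- arXiv:1212.0021 — 2 statements merged into one kernel-verified Lean document; each statement's English description precedes it below -/
import Mathlib

section
/- Suppose the restriction L|_N is absolutely irreducible. Let M and M′ be finite-dimensional kG-modules whose restrictions to N are isomorphic to finite direct sums of copies of L|_N, and give H_M := Hom_{kN}(L|_N, M|_N) and H_{M′} := Hom_{kN}(L|_N, M′|_N) the kG-module structures (g·f)(x) = g·f(g⁻¹·x). Then the map Hom_{kG}(M, M′) → Hom_{kG}(H_M, H_{M′}) sending φ to (f ↦ φ ∘ f) is bijective. Moreover, for every finite-dimensional k[G/N]-module Y, the kG-module L ⊗ₖ (inflation of Y) restricts to N as a direct sum of copies of L|_N, and H_{L⊗Y} is isomorphic to the inflation of Y as kG-modules. -/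
/-!
STATEMENT 4.  Setting of statement 3, with `L|_N` absolutely irreducible.  For `M`, `M′`
finite-dimensional `kG`-modules restricting to `N` as direct sums of copies of `L|_N`,
with `H_M = Hom_{kN}(L|_N, M|_N)`, `H_{M′} = Hom_{kN}(L|_N, M′|_N)` carrying the
`G`-action `(g·f)(x) = g·f(g⁻¹x)`, the natural map `Hom_{kG}(M,M′) → Hom_{kG}(H_M,H_{M′})`,
`φ ↦ (f ↦ φ ∘ f)`, is bijective (encoded: it is well defined, and every `G`-equivariant
`ψ : H_M → H_{M′}` comes from a unique equivariant `φ`).  Moreover, for every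
finite-dimensional `k[G/N]`-module `Y`, the `kG`-module `L ⊗ₖ (inflation of Y)` restricts
to `N` as a direct sum of copies of `L|_N`, and `H_{L⊗Y}` is isomorphic, as a `kG`-module,
to the inflation of `Y`.
-/
open Submodule TensorProduct

noncomputable section

variable (k : Type) [Field k]

/-- `f` intertwines the representations `ρV` and `ρW`. -/
def IsEquivariant {H V W : Type} [Monoid H] [AddCommGroup V] [Module k V]
    [AddCommGroup W] [Module k W] (ρV : Representation k H V) (ρW : Representation k H W)
    (f : V →ₗ[k] W) : Prop :=
  ∀ (h : H) (v : V), f (ρV h v) = ρW h (f v)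

/-- `p` is a subrepresentation (i.e. an `H`-invariant `k`-subspace). -/
def IsSubrep {H V : Type} [Monoid H] [AddCommGroup V] [Module k V]
    (ρ : Representation k H V) (p : Submodule k V) : Prop :=
  ∀ (h : H), ∀ v ∈ p, ρ h v ∈ p

/-- `ρ` is an irreducible representation. -/
def IsIrreducibleRep {H V : Type} [Monoid H] [AddCommGroup V] [Module k V]
    (ρ : Representation k H V) : Prop :=
  Nontrivial V ∧ ∀ p : Submodule k V, IsSubrep k ρ p → p = ⊥ ∨ p = ⊤

/-- `ρQ` is a projective object in the category of representations of `H` over `k`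
(equivalently, of `kH`-modules). -/
def IsProjectiveRep {H Q : Type} [Monoid H] [AddCommGroup Q] [Module k Q]
    (ρQ : Representation k H Q) : Prop :=
  ∀ (A B : Type) [AddCommGroup A] [Module k A] [AddCommGroup B] [Module k B],
    ∀ (ρA : Representation k H A) (ρB : Representation k H B) (f : A →ₗ[k] B),
      IsEquivariant k ρA ρB f → Function.Surjective f →
      ∀ q : Q →ₗ[k] B, IsEquivariant k ρQ ρB q →
        ∃ l : Q →ₗ[k] A, IsEquivariant k ρQ ρA l ∧ f ∘ₗ l = q

/-- `π : Q → V` is a projective cover in the category of representations of `H`: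
`Q` is projective, `π` is a surjective morphism, and its kernel is superfluous
(any subrepresentation `p` with `p + ker π = Q` equals `Q`). -/
def IsProjectiveCover {H Q V : Type} [Monoid H] [AddCommGroup Q] [Module k Q]
    [AddCommGroup V] [Module k V] (ρQ : Representation k H Q) (ρV : Representation k H V)
    (π : Q →ₗ[k] V) : Prop :=
  IsProjectiveRep k ρQ ∧ IsEquivariant k ρQ ρV π ∧ Function.Surjective π ∧
    ∀ p : Submodule k Q, IsSubrep k ρQ p → p ⊔ LinearMap.ker π = ⊤ → p = ⊤

/-- For `P ⊆ kH` a `k`-subspace and `V` a representation of `H`, the subspace `P·V`. -/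
def actSpan {H V : Type} [Monoid H] [AddCommGroup V] [Module k V]
    (ρ : Representation k H V) (P : Submodule k (MonoidAlgebra k H)) : Submodule k V :=
  span k {w : V | ∃ x ∈ P, ∃ v : V, w = ρ.asAlgebraHom x v}

/-- The quotient `k`-module `p/q` (more precisely `p/(q ∩ p)`). -/
abbrev QuotMod {V : Type} [AddCommGroup V] [Module k V] (p q : Submodule k V) : Type :=
  ↥p ⧸ (Submodule.comap p.subtype q)

/-- `τ` is the representation on `p/q` induced by `ρ`. -/
def IsInducedRep {H V : Type} [Monoid H] [AddCommGroup V] [Module k V]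
    (ρ : Representation k H V) (p q : Submodule k V)
    (τ : Representation k H (QuotMod k p q)) : Prop :=
  ∀ (h : H) (v w : ↥p), (w : V) = ρ h (v : V) →
    τ h (Submodule.Quotient.mk v) = Submodule.Quotient.mk w

variable (G : Type) [Group G] [Fintype G] (N : Subgroup G) [N.Normal]

/-- The algebra map `kN →ₐ[k] kG` induced by the inclusion `N ↪ G`. -/
def incl : MonoidAlgebra k ↥N →ₐ[k] MonoidAlgebra k G :=
  MonoidAlgebra.mapDomainAlgHom k k N.subtype

/-- The Jacobson radical `J` of `kN`, viewed as a `k`-submodule of `kN`. -/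
def Jrad : Submodule k (MonoidAlgebra k ↥N) :=
  ((⊥ : Ideal (MonoidAlgebra k ↥N)).jacobson).restrictScalars k

/-- `R`, the image in `kG` of the Jacobson radical of `kN`. -/
def Rimg : Submodule k (MonoidAlgebra k G) :=
  Submodule.map (incl k G N).toLinearMap (Jrad k G N)

/-- `I`, the two-sided ideal of `kG` generated by `R` (as a `k`-submodule this is
`kG * R * kG`, the smallest two-sided ideal containing `R`). -/
def Igen : Submodule k (MonoidAlgebra k G) :=
  (⊤ : Submodule k (MonoidAlgebra k G)) * Rimg k G N * (⊤ : Submodule k (MonoidAlgebra k G))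

/-- `Hom_{kN}(L, M)`: the `N`-equivariant `k`-linear maps, a `k`-subspace of `L →ₗ[k] M`. -/
def NHom (L M : Type) [AddCommGroup L] [Module k L] [AddCommGroup M] [Module k M]
    (ρL : Representation k G L) (ρM : Representation k G M) : Submodule k (L →ₗ[k] M) where
  carrier := {f | ∀ (n : ↥N) (x : L), f (ρL ↑n x) = ρM ↑n (f x)}
  add_mem' := by
    intro f g hf hg n x
    simp [hf n x, hg n x]
  zero_mem' := by intro n x; simp
  smul_mem' := by
    intro c f hf n x
    simp [hf n x]



theorem stmt4 (L M M' : Type)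
    [AddCommGroup L] [Module k L] [FiniteDimensional k L]
    [AddCommGroup M] [Module k M] [FiniteDimensional k M]
    [AddCommGroup M'] [Module k M'] [FiniteDimensional k M']
    (ρL : Representation k G L) (ρM : Representation k G M) (ρM' : Representation k G M')
    (hirr : IsIrreducibleRep k (ρL.comp N.subtype : Representation k ↥N L))
    (habs : ∀ f : L →ₗ[k] L, (∀ (n : ↥N) (x : L), f (ρL ↑n x) = ρL ↑n (f x)) →
      ∃ c : k, f = c • (LinearMap.id : L →ₗ[k] L))
    (hM : ∃ (m : ℕ) (e : M ≃ₗ[k] (Fin m → L)), ∀ (n : ↥N) (x : M) (i : Fin m),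
      e (ρM ↑n x) i = ρL ↑n (e x i))
    (hM' : ∃ (m : ℕ) (e : M' ≃ₗ[k] (Fin m → L)), ∀ (n : ↥N) (x : M') (i : Fin m),
      e (ρM' ↑n x) i = ρL ↑n (e x i))
    (σM : Representation k G ↥(NHom k G N L M ρL ρM))
    (hσM : ∀ (g : G) (f : ↥(NHom k G N L M ρL ρM)) (x : L),
      ((σM g f : L →ₗ[k] M)) x = ρM g ((f : L →ₗ[k] M) (ρL g⁻¹ x)))
    (σM' : Representation k G ↥(NHom k G N L M' ρL ρM'))
    (hσM' : ∀ (g : G) (f : ↥(NHom k G N L M' ρL ρM')) (x : L),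
      ((σM' g f : L →ₗ[k] M')) x = ρM' g ((f : L →ₗ[k] M') (ρL g⁻¹ x))) :
    (∀ φ : M →ₗ[k] M', IsEquivariant k ρM ρM' φ →
      ∀ f : ↥(NHom k G N L M ρL ρM),
        φ ∘ₗ (f : L →ₗ[k] M) ∈ NHom k G N L M' ρL ρM') ∧
    (∀ ψ : ↥(NHom k G N L M ρL ρM) →ₗ[k] ↥(NHom k G N L M' ρL ρM'),
      IsEquivariant k σM σM' ψ →
      ∃! φ : {φ : M →ₗ[k] M' // IsEquivariant k ρM ρM' φ},
        ∀ f : ↥(NHom k G N L M ρL ρM),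
          ((ψ f : L →ₗ[k] M')) = φ.1 ∘ₗ (f : L →ₗ[k] M)) ∧
    (∀ (Y : Type) [AddCommGroup Y] [Module k Y] [FiniteDimensional k Y]
      (ρY : Representation k (G ⧸ N) Y),
      (∃ (m : ℕ) (e : L ⊗[k] Y ≃ₗ[k] (Fin m → L)),
        ∀ (n : ↥N) (t : L ⊗[k] Y) (i : Fin m),
          e ((ρL.tprod (ρY.comp (QuotientGroup.mk' N))) ↑n t) i = ρL ↑n (e t i)) ∧
      ∀ σY : Representation k G
          ↥(NHom k G N L (L ⊗[k] Y) ρL (ρL.tprod (ρY.comp (QuotientGroup.mk' N)))),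
        (∀ (g : G)
            (f : ↥(NHom k G N L (L ⊗[k] Y) ρL (ρL.tprod (ρY.comp (QuotientGroup.mk' N)))))
            (x : L),
          ((σY g f : L →ₗ[k] L ⊗[k] Y)) x =
            (ρL.tprod (ρY.comp (QuotientGroup.mk' N))) g
              ((f : L →ₗ[k] L ⊗[k] Y) (ρL g⁻¹ x))) →
        ∃ e : ↥(NHom k G N L (L ⊗[k] Y) ρL (ρL.tprod (ρY.comp (QuotientGroup.mk' N))))
            ≃ₗ[k] Y,
          ∀ (g : G)
              (f : ↥(NHom k G N L (L ⊗[k] Y) ρL (ρL.tprod (ρY.comp (QuotientGroup.mk' N))))),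
            e (σY g f) = (ρY.comp (QuotientGroup.mk' N)) g (e f)) := by
  classical
  have hmemM : ∀ (f : ↥(NHom k G N L M ρL ρM)) (n : ↥N) (x : L),
      (f : L →ₗ[k] M) (ρL ↑n x) = ρM ↑n ((f : L →ₗ[k] M) x) := fun f => f.2
  refine ⟨?_, ?_, ?_⟩
  · intro φ hφ f n x
    simp only [LinearMap.comp_apply]
    rw [hmemM f n x, hφ]
  · intro ψ hψ
    obtain ⟨m, e, he⟩ := hM
    have hFmem : ∀ i : Fin m,
        (e.symm.toLinearMap ∘ₗ LinearMap.single k (fun _ => L) i) ∈ NHom k G N L M ρL ρM := by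
      intro i n x
      apply e.injective
      funext j
      simp only [LinearMap.comp_apply, LinearEquiv.coe_coe, LinearMap.coe_single,
        LinearEquiv.coe_toLinearMap]
      rw [e.apply_symm_apply, he, e.apply_symm_apply]
      by_cases hj : j = i
      · subst hj; simp
      · simp [Pi.single_eq_of_ne hj]
    set F : Fin m → ↥(NHom k G N L M ρL ρM) := fun i =>
      ⟨e.symm.toLinearMap ∘ₗ LinearMap.single k (fun _ => L) i, hFmem i⟩ with hFdef
    have hFapp : ∀ (i : Fin m) (x : L), (F i : L →ₗ[k] M) x = e.symm (Pi.single i x) :=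
      fun i x => rfl
    have hspan : ∀ y : M, y = ∑ i, (F i : L →ₗ[k] M) (e y i) := by
      intro y
      have h1 : ∑ i, (F i : L →ₗ[k] M) (e y i) = e.symm (∑ i, Pi.single i (e y i)) := by
        rw [map_sum]
        exact Finset.sum_congr rfl fun i _ => hFapp i _
      rw [h1, Finset.univ_sum_single, e.symm_apply_apply]
    have hdecomp : ∀ f : ↥(NHom k G N L M ρL ρM), ∃ c : Fin m → k,
        ∀ (x : L) (i : Fin m), e ((f : L →ₗ[k] M) x) i = c i • x := by
      intro f
      have hg : ∀ i : Fin m, ∃ c : k,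
          (LinearMap.proj i ∘ₗ (e.toLinearMap ∘ₗ (f : L →ₗ[k] M))) = c • LinearMap.id := by
        intro i
        apply habs
        intro n x
        simp only [LinearMap.comp_apply, LinearMap.proj_apply, LinearEquiv.coe_coe]
        rw [hmemM f n x, he]
      choose c hc using hg
      refine ⟨c, fun x i => ?_⟩
      have h1 := LinearMap.congr_fun (hc i) x
      simpa using h1
    have hcomb : ∀ (f : ↥(NHom k G N L M ρL ρM)) (c : Fin m → k),
        (∀ (x : L) (i : Fin m), e ((f : L →ₗ[k] M) x) i = c i • x) →
        f = ∑ i, c i • F i := by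
      intro f c hcf
      apply Subtype.ext
      apply LinearMap.ext
      intro x
      have hc1 : ((∑ i, c i • F i : ↥(NHom k G N L M ρL ρM)) : L →ₗ[k] M) x
          = ∑ i, c i • (F i : L →ₗ[k] M) x := by
        simp
      rw [hc1]
      have h2 : ∑ i, c i • (F i : L →ₗ[k] M) x = e.symm (∑ i, Pi.single i (c i • x)) := by
        rw [map_sum]
        refine Finset.sum_congr rfl fun i _ => ?_
        rw [hFapp, Pi.single_smul, map_smul]
      rw [h2, Finset.univ_sum_single]
      apply e.injective
      rw [e.apply_symm_apply]
      funext i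
      exact hcf x i
    set φ0 : M →ₗ[k] M' :=
      ∑ i, (((ψ (F i) : L →ₗ[k] M')) ∘ₗ (LinearMap.proj i ∘ₗ e.toLinearMap)) with hφ0def
    have hkey : ∀ (f : ↥(NHom k G N L M ρL ρM)) (x : L),
        φ0 ((f : L →ₗ[k] M) x) = (ψ f : L →ₗ[k] M') x := by
      intro f x
      obtain ⟨c, hcf⟩ := hdecomp f
      have hL : φ0 ((f : L →ₗ[k] M) x) = ∑ i, c i • (ψ (F i) : L →ₗ[k] M') x := by
        rw [hφ0def]
        simp only [LinearMap.sum_apply, LinearMap.comp_apply, LinearMap.proj_apply,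
          LinearEquiv.coe_coe]
        exact Finset.sum_congr rfl fun i _ => by rw [hcf x i, map_smul]
      have hR : (ψ f : L →ₗ[k] M') x = ∑ i, c i • (ψ (F i) : L →ₗ[k] M') x := by
        rw [hcomb f c hcf, map_sum]
        simp
      rw [hL, hR]
    have huniq : ∀ φ₁ φ₂ : M →ₗ[k] M',
        (∀ (f : ↥(NHom k G N L M ρL ρM)) (x : L),
          φ₁ ((f : L →ₗ[k] M) x) = φ₂ ((f : L →ₗ[k] M) x)) → φ₁ = φ₂ := by
      intro φ₁ φ₂ h
      apply LinearMap.ext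
      intro y
      calc φ₁ y = φ₁ (∑ i, (F i : L →ₗ[k] M) (e y i)) := by rw [← hspan y]
        _ = ∑ i, φ₁ ((F i : L →ₗ[k] M) (e y i)) := map_sum φ₁ _ Finset.univ
        _ = ∑ i, φ₂ ((F i : L →ₗ[k] M) (e y i)) :=
            Finset.sum_congr rfl fun i _ => h (F i) _
        _ = φ₂ (∑ i, (F i : L →ₗ[k] M) (e y i)) := (map_sum φ₂ _ Finset.univ).symm
        _ = φ₂ y := by rw [← hspan y]
    have hequiv : IsEquivariant k ρM ρM' φ0 := by
      intro g y
      have hkey2 : (ρM' g⁻¹ ∘ₗ (φ0 ∘ₗ (ρM g))) = φ0 := by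
        apply huniq
        intro f x
        simp only [LinearMap.comp_apply]
        have h1 : ρM g ((f : L →ₗ[k] M) x) = (σM g f : L →ₗ[k] M) (ρL g x) := by
          rw [hσM]
          congr 1
          rw [← Module.End.mul_apply, ← map_mul, inv_mul_cancel, map_one, Module.End.one_apply]
        rw [h1, hkey (σM g f) (ρL g x), hψ g f, hσM' g (ψ f) (ρL g x)]
        rw [show ρL g⁻¹ (ρL g x) = x from by
          rw [← Module.End.mul_apply, ← map_mul, inv_mul_cancel, map_one, Module.End.one_apply]]
        rw [show ∀ z : M', ρM' g⁻¹ (ρM' g z) = z from fun z => by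
          rw [← Module.End.mul_apply, ← map_mul, inv_mul_cancel, map_one, Module.End.one_apply]]
        exact (hkey f x).symm
      have h2 := LinearMap.congr_fun hkey2 y
      simp only [LinearMap.comp_apply] at h2
      rw [← h2, ← Module.End.mul_apply, ← map_mul, mul_inv_cancel, map_one, Module.End.one_apply]
    refine ⟨⟨φ0, hequiv⟩, ?_, ?_⟩
    · intro f
      apply LinearMap.ext
      intro x
      simp only [LinearMap.comp_apply]
      exact (hkey f x).symm
    · rintro ⟨φ₁, hφ₁⟩ h1
      apply Subtype.ext
      apply huniq
      intro f x
      have h2 := LinearMap.congr_fun (h1 f) x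
      simp only [LinearMap.comp_apply] at h2
      rw [← h2]
      exact (hkey f x).symm
  · intro Y _ _ _ ρY
    have htriv : ∀ (n : ↥N) (y : Y), (ρY.comp (QuotientGroup.mk' N)) ↑n y = y := by
      intro n y
      have h1 : (QuotientGroup.mk' N) (↑n : G) = 1 := (QuotientGroup.eq_one_iff _).mpr n.2
      rw [MonoidHom.comp_apply, h1, map_one, Module.End.one_apply]
    set m := Module.finrank k Y with hm
    set E := (Module.finBasis k Y).equivFun with hE
    set e :=
      (TensorProduct.congr (LinearEquiv.refl k L) E).trans
        (TensorProduct.piScalarRight k k L (Fin m)) with hedef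
    have hev : ∀ (x : L) (y : Y) (i : Fin m), e (x ⊗ₜ[k] y) i = E y i • x := by
      intro x y i
      rw [hedef]
      simp [TensorProduct.congr_tmul, TensorProduct.piScalarRightHom_tmul]
    have he : ∀ (n : ↥N) (t : L ⊗[k] Y) (i : Fin m),
        e ((ρL.tprod (ρY.comp (QuotientGroup.mk' N))) ↑n t) i = ρL ↑n (e t i) := by
      intro n t i
      induction t using TensorProduct.induction_on with
      | zero => simp
      | tmul x y =>
          rw [Representation.tprod_apply, TensorProduct.map_tmul, htriv n y, hev, hev, map_smul]
      | add a b ha hb =>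
          simp only [map_add, Pi.add_apply, ha, hb]
    refine ⟨⟨m, e, he⟩, ?_⟩
    intro σY hσY
    have hmemθ : ∀ y : Y,
        ((TensorProduct.mk k L Y).flip y) ∈
          NHom k G N L (L ⊗[k] Y) ρL (ρL.tprod (ρY.comp (QuotientGroup.mk' N))) := by
      intro y n x
      show (ρL ↑n x) ⊗ₜ[k] y
          = (ρL.tprod (ρY.comp (QuotientGroup.mk' N))) ↑n (x ⊗ₜ[k] y)
      rw [Representation.tprod_apply, TensorProduct.map_tmul, htriv n y]
    set Θ : Y →ₗ[k]
        ↥(NHom k G N L (L ⊗[k] Y) ρL (ρL.tprod (ρY.comp (QuotientGroup.mk' N)))) :=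
      LinearMap.codRestrict _ (TensorProduct.mk k L Y).flip hmemθ with hΘdef
    have hΘapp : ∀ (y : Y) (x : L), ((Θ y : L →ₗ[k] L ⊗[k] Y)) x = x ⊗ₜ[k] y :=
      fun y x => rfl
    have hinj : Function.Injective Θ := by
      rw [injective_iff_map_eq_zero]
      intro y hy
      have h0 : ∀ x : L, (x ⊗ₜ[k] y : L ⊗[k] Y) = 0 := by
        intro x
        have h2 := LinearMap.congr_fun (congrArg Subtype.val hy) x
        simpa [hΘapp] using h2
      have : Nontrivial L := hirr.1
      obtain ⟨x, hx⟩ := exists_ne (0 : L)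
      apply E.injective
      funext i
      have h1 := congrFun (congrArg e (h0 x)) i
      rw [hev] at h1
      simp only [map_zero, Pi.zero_apply] at h1
      rcases smul_eq_zero.mp h1 with h | h
      · simp [h]
      · exact absurd h hx
    have hsurj : Function.Surjective Θ := by
      intro f
      have hg : ∀ i : Fin m, ∃ c : k,
          (LinearMap.proj i ∘ₗ (e.toLinearMap ∘ₗ (f : L →ₗ[k] L ⊗[k] Y)))
            = c • LinearMap.id := by
        intro i
        apply habs
        intro n x
        simp only [LinearMap.comp_apply, LinearMap.proj_apply, LinearEquiv.coe_coe]
        rw [f.2 n x, he]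
      choose c hc using hg
      refine ⟨E.symm c, ?_⟩
      apply Subtype.ext
      apply LinearMap.ext
      intro x
      apply e.injective
      funext i
      have h1 := LinearMap.congr_fun (hc i) x
      simp only [LinearMap.comp_apply, LinearMap.proj_apply, LinearEquiv.coe_coe,
        LinearMap.smul_apply, LinearMap.id_apply] at h1
      rw [hΘapp, hev, E.apply_symm_apply, h1]
    set eqv := LinearEquiv.ofBijective Θ ⟨hinj, hsurj⟩ with heqvdef
    have heqvapp : ∀ (y : Y) (x : L), ((eqv y : L →ₗ[k] L ⊗[k] Y)) x = x ⊗ₜ[k] y :=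
      fun y x => hΘapp y x
    refine ⟨eqv.symm, ?_⟩
    intro g f
    have hC : ∀ (y : Y),
        eqv ((ρY.comp (QuotientGroup.mk' N)) g y) = σY g (eqv y) := by
      intro y
      apply Subtype.ext
      apply LinearMap.ext
      intro x
      rw [heqvapp, hσY g (eqv y) x, heqvapp y (ρL g⁻¹ x),
        Representation.tprod_apply, TensorProduct.map_tmul,
        show (ρL g) (ρL g⁻¹ x) = x from by
          rw [← Module.End.mul_apply, ← map_mul, mul_inv_cancel, map_one, Module.End.one_apply]]
    apply eqv.injective
    rw [eqv.apply_symm_apply, hC, eqv.apply_symm_apply]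

end
end

section
/- Let T be a projective cover of L|_N in the category of kN-modules, and let J be the Jacobson radical of kN. Then for every natural number n there exists a kG-module structure on the quotient (JⁿT)/(Jⁿ⁺¹T) which extends its natural kN-module structure (i.e., the composite kN → kG → End_k((JⁿT)/(Jⁿ⁺¹T)) is the natural kN-action) and on which the two-sided ideal I of kG generated by the image of J acts as zero; for n = 0 this structure can be chosen so that T/JT is isomorphic to L as a kG-module. -/
/-!
STATEMENT 5.  `k` a field, `G` a finite group, `N ⊴ G`; `L` a finite-dimensional
`kG`-module with `L|_N` irreducible.  Let `T` be a projective cover of `L|_N` in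
`kN`-modules and `J` the Jacobson radical of `kN`.  For every `n`, the quotient
`(JⁿT)/(Jⁿ⁺¹T)` carries a `kG`-module structure extending its natural `kN`-module
structure (the composite `kN → kG → End_k((JⁿT)/(Jⁿ⁺¹T))` is the natural `kN`-action)
on which the two-sided ideal `I` of `kG` generated by the image of `J` acts as zero;
for `n = 0` it can be chosen so that `T/JT ≅ L` as `kG`-modules.
-/
open Submodule TensorProduct

noncomputable section

variable (k : Type) [Field k]

variable (G : Type) [Group G] [Fintype G] (N : Subgroup G) [N.Normal]

/-!
For `g ∈ G`, projectivity of `T` lifts `ρL g ∘ π` along `π` to a `k`-linear `ψ : T → T` that is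
semilinear for conjugation by `g`, i.e. `ψ (u • t) = (g u g⁻¹) • ψ t` for `u ∈ N`. Conjugation
preserves `J`, so `ψ` preserves every `JᵐT`. Two lifts of the same `g` differ by a semilinear map
into `ker π`, and `ker π ⊆ JT` because the kernel of a projective cover is superfluous; hence they
induce the same map on `JⁿT / Jⁿ⁺¹T`. As a product of lifts of `g` and `h` is a lift of `gh`, and
`ρT u` is a lift of `u ∈ N`, this gives a representation of `G` extending that of `N`, on which `J`
acts as zero. For `n = 0` we have `JT = ker π` (`J` annihilates the simple module `L|_N`), so `π`
identifies `T / JT` with `L`, `G`-equivariantly.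
-/

section Representation

variable {k : Type} [Field k] {H V W : Type} [Monoid H] [AddCommGroup V] [Module k V]
  [AddCommGroup W] [Module k W]

theorem IsEquivariant.apply_asAlgebraHom {ρV : Representation k H V}
    {ρW : Representation k H W} {f : V →ₗ[k] W} (hf : IsEquivariant k ρV ρW f)
    (x : MonoidAlgebra k H) (v : V) :
    f (ρV.asAlgebraHom x v) = ρW.asAlgebraHom x (f v) := by
  induction x using MonoidAlgebra.induction_on with
  | of h => simp [hf h v]
  | add x y hx hy => simp [hx, hy]
  | smul r x hx => simp [hx]

theorem IsSubrep.asAlgebraHom_mem {ρ : Representation k H V} {p : Submodule k V}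
    (hp : IsSubrep k ρ p) (x : MonoidAlgebra k H) {v : V} (hv : v ∈ p) :
    ρ.asAlgebraHom x v ∈ p := by
  induction x using MonoidAlgebra.induction_on with
  | of h => simpa using hp h v hv
  | add x y hx hy => simpa using add_mem hx hy
  | smul r x hx => simpa using p.smul_mem r hx

theorem asAlgebraHom_mapDomainAlgHom {H' : Type} [Monoid H'] (φ : H →* H')
    (ρ : Representation k H' V) (x : MonoidAlgebra k H) :
    ρ.asAlgebraHom (MonoidAlgebra.mapDomainAlgHom k k φ x) =
      Representation.asAlgebraHom (ρ.comp φ) x := by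
  induction x using MonoidAlgebra.induction_on with
  | of h => simp
  | add x y hx hy => rw [map_add, map_add, map_add, hx, hy]
  | smul r x hx => rw [map_smul, map_smul, map_smul, hx]

theorem IsIrreducibleRep.isIrreducible {ρ : Representation k H V}
    (h : IsIrreducibleRep k ρ) : ρ.IsIrreducible where
  exists_pair_ne := by
    have := h.1
    obtain ⟨v, hv⟩ := exists_ne (0 : V)
    refine ⟨⊥, ⊤, fun hbt => hv ?_⟩
    have : v ∈ (⊥ : Subrepresentation ρ).toSubmodule := hbt ▸ Submodule.mem_top
    exact (Submodule.mem_bot k).1 this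
  eq_bot_or_eq_top p :=
    (h.2 p.toSubmodule p.apply_mem_toSubmodule).imp
      (fun hp => Subrepresentation.toSubmodule_injective hp)
      (fun hp => Subrepresentation.toSubmodule_injective hp)

theorem IsIrreducibleRep.asAlgebraHom_eq_zero_of_mem_jacobson {ρ : Representation k H V}
    (h : IsIrreducibleRep k ρ) {x : MonoidAlgebra k H}
    (hx : x ∈ Ring.jacobson (MonoidAlgebra k H)) : ρ.asAlgebraHom x = 0 := by
  have := (ρ.irreducible_iff_isSimpleModule_asModule).1 h.isIrreducible
  ext v
  have hann := IsSemisimpleModule.jacobson_le_annihilator _ ρ.asModule hx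
  simpa [Representation.asModuleEquiv_map_smul] using
    congrArg ρ.asModuleEquiv (Module.mem_annihilator.1 hann (ρ.asModuleEquiv.symm v))

theorem actSpan_le_iff {ρ : Representation k H V} {P : Submodule k (MonoidAlgebra k H)}
    {S : Submodule k V} : actSpan k ρ P ≤ S ↔ ∀ x ∈ P, ∀ v, ρ.asAlgebraHom x v ∈ S := by
  refine span_le.trans ⟨fun h x hx v => h ⟨x, hx, v, rfl⟩, ?_⟩
  rintro h _ ⟨x, hx, v, rfl⟩
  exact h x hx v

theorem asAlgebraHom_mem_actSpan (ρ : Representation k H V)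
    {P : Submodule k (MonoidAlgebra k H)} {x : MonoidAlgebra k H} (hx : x ∈ P) (v : V) :
    ρ.asAlgebraHom x v ∈ actSpan k ρ P :=
  subset_span ⟨x, hx, v, rfl⟩

theorem asAlgebraHom_mem_actSpan_mul {ρ : Representation k H V}
    {P Q : Submodule k (MonoidAlgebra k H)} {x : MonoidAlgebra k H} (hx : x ∈ P) {v : V}
    (hv : v ∈ actSpan k ρ Q) : ρ.asAlgebraHom x v ∈ actSpan k ρ (P * Q) := by
  refine (actSpan_le_iff (S := (actSpan k ρ (P * Q)).comap (ρ.asAlgebraHom x))).2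
    (fun y hy w => ?_) hv
  rw [mem_comap, ← Module.End.mul_apply, ← map_mul]
  exact asAlgebraHom_mem_actSpan ρ (mul_mem_mul hx hy) w

theorem actSpan_one (ρ : Representation k H V) : actSpan k ρ 1 = ⊤ :=
  eq_top_iff.2 fun v _ => by simpa using asAlgebraHom_mem_actSpan ρ (one_le.1 le_rfl) v

end Representation

section ProjectiveCover

variable {k : Type} [Field k] {H T V : Type} [Group H] [AddCommGroup T] [Module k T]
  [AddCommGroup V] [Module k V] {ρT : Representation k H T} {ρV : Representation k H V}
  {π : T →ₗ[k] V}

theorem leftRegular_apply (h : H) (x : MonoidAlgebra k H) :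
    Representation.leftRegular k H h x = MonoidAlgebra.of k H h * x := by
  rw [← Representation.asAlgebraHom_of, Representation.asAlgebraHom_ofMulAction_smul_eq_mul]

theorem free_apply_apply {α : Type} (h : H) (z : α →₀ MonoidAlgebra k H) (a : α) :
    Representation.free k H α h z a = Representation.leftRegular k H h (z a) := by
  induction z using Finsupp.induction_linear with
  | zero => simp
  | add z z' hz hz' => simp only [map_add, Finsupp.add_apply, hz, hz']
  | single b x =>
    rw [Representation.finsupp_single]
    rcases eq_or_ne b a with rfl | hne
    · simp
    · rw [Finsupp.single_eq_of_ne' hne, Finsupp.single_eq_of_ne' hne, map_zero]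

/-- If `c t` avoided a maximal left ideal `m`, then `c⁻¹(m)` would be a proper subrepresentation
supplementing `ker π`. -/
theorem IsProjectiveCover.apply_mem_jacobson (hcov : IsProjectiveCover k ρT ρV π)
    {c : T →ₗ[k] MonoidAlgebra k H}
    (hc : IsEquivariant k ρT (Representation.leftRegular k H) c) {t : T} (ht : π t = 0) :
    c t ∈ Ring.jacobson (MonoidAlgebra k H) := by
  have hc' : ∀ x y, c (ρT.asAlgebraHom x y) = x * c y := fun x y => by
    rw [hc.apply_asAlgebraHom, Representation.asAlgebraHom_ofMulAction_smul_eq_mul]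
  rw [Ring.jacobson_eq_sInf_isMaximal]
  refine Submodule.mem_sInf.2 fun m hm => ?_
  by_contra hct
  obtain ⟨a, ha, d, had⟩ : ∃ a ∈ m, ∃ d, a + d * c t = 1 := by
    have hm : Ideal.IsMaximal m := hm
    have htop : m ⊔ Ideal.span {c t} = ⊤ :=
      hm.out.2 _ (lt_of_le_of_ne le_sup_left fun h =>
        hct (h ▸ mem_sup_right (Ideal.subset_span rfl)))
    obtain ⟨a, ha, b, hb, hab⟩ := mem_sup.1 (htop ▸ mem_top : (1 : MonoidAlgebra k H) ∈ _)
    obtain ⟨d, rfl⟩ := Ideal.mem_span_singleton'.1 hb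
    exact ⟨a, ha, d, hab⟩
  let p : Submodule k T := (m.restrictScalars k).comap c
  have hp : IsSubrep k ρT p := fun h y hy => by
    show c (ρT h y) ∈ m
    rw [← Representation.asAlgebraHom_of, hc']
    exact Ideal.mul_mem_left _ _ hy
  have hsup : p ⊔ LinearMap.ker π = ⊤ := eq_top_iff.2 fun z _ => by
    have hz : z - ρT.asAlgebraHom (c z * d) t ∈ p := by
      show c (z - _) ∈ m
      rw [map_sub, hc', show c z - c z * d * c t = c z * a by
        rw [eq_sub_of_add_eq had, mul_sub, mul_one, mul_assoc]]
      exact Ideal.mul_mem_left _ _ ha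
    have hker : ρT.asAlgebraHom (c z * d) t ∈ LinearMap.ker π := by
      rw [LinearMap.mem_ker, hcov.2.1.apply_asAlgebraHom, ht, map_zero]
    simpa using add_mem_sup hz hker
  exact hct (hcov.2.2.2 p hp hsup ▸ mem_top : t ∈ p)

/-- Split the free cover `T →₀ kH → T` by projectivity: the coordinates of the splitting are
`kH`-linear functionals on `T`, which take `ker π` into the Jacobson radical. -/
theorem IsProjectiveCover.ker_le_actSpan_jacobson (hcov : IsProjectiveCover k ρT ρV π) :
    LinearMap.ker π ≤
      actSpan k ρT ((Ring.jacobson (MonoidAlgebra k H)).restrictScalars k) := by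
  classical
  let ε : (T →₀ MonoidAlgebra k H) →ₗ[k] T :=
    Finsupp.lsum k fun t => ρT.asAlgebraHom.toLinearMap.flip t
  have hε_single : ∀ t x, ε (Finsupp.single t x) = ρT.asAlgebraHom x t := fun t x => by
    simp [ε]
  have hε : IsEquivariant k (Representation.free k H T) ρT ε := fun h z => by
    induction z using Finsupp.induction_linear with
    | zero => simp
    | add z z' hz hz' => simp only [map_add, hz, hz']
    | single t x =>
      rw [Representation.finsupp_single, hε_single, hε_single, leftRegular_apply, map_mul,
        Module.End.mul_apply, Representation.asAlgebraHom_of]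
  obtain ⟨s, hs, hεs⟩ := hcov.1 _ T _ ρT ε hε
    (fun t => ⟨Finsupp.single t 1, by simp [hε_single]⟩) LinearMap.id fun _ _ => rfl
  have hcoord : ∀ t', IsEquivariant k ρT (Representation.leftRegular k H)
      (Finsupp.lapply t' ∘ₗ s) := fun t' h y => by
    simp [hs h y, free_apply_apply]
  intro t ht
  rw [show t = ε (s t) from (LinearMap.congr_fun hεs t).symm, Finsupp.lsum_apply]
  exact Submodule.finsuppSum_mem _ _ _ _ fun t' _ =>
    asAlgebraHom_mem_actSpan ρT (hcov.apply_mem_jacobson (hcoord t') ht) t'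

end ProjectiveCover

theorem AlgEquiv.apply_mem_jacobson_pow {k A : Type} [Field k] [Ring A] [Algebra k A]
    (e : A ≃ₐ[k] A) (m : ℕ) {x : A} (hx : x ∈ (Ring.jacobson A).restrictScalars k ^ m) :
    e x ∈ (Ring.jacobson A).restrictScalars k ^ m := by
  have hJ : ((Ring.jacobson A).restrictScalars k).map e.toAlgHom.toLinearMap ≤
      (Ring.jacobson A).restrictScalars k := by
    rintro _ ⟨y, hy, rfl⟩
    exact Ring.map_jacobson_le (e.toRingEquiv : A →+* A) ⟨y, hy, rfl⟩
  have := Submodule.mem_map_of_mem (f := e.toAlgHom.toLinearMap) hx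
  rw [Submodule.map_pow] at this
  exact pow_le_pow_left' hJ m this

section QuotMod

variable {k : Type} [Field k] {V : Type} [AddCommGroup V] [Module k V] {p q : Submodule k V}

def quotModMap (ψ : V →ₗ[k] V) (hp : p ≤ p.comap ψ) (hq : q ≤ q.comap ψ) :
    Module.End k (QuotMod k p q) :=
  (q.comap p.subtype).mapQ (q.comap p.subtype) (ψ.restrict hp) fun _ hv => hq hv

theorem quotModMap_mk (ψ : V →ₗ[k] V) (hp : p ≤ p.comap ψ) (hq : q ≤ q.comap ψ) (v : p) :
    quotModMap ψ hp hq (Submodule.Quotient.mk v) = Submodule.Quotient.mk ⟨ψ v, hp v.2⟩ :=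
  rfl

theorem quotModMap_eq {ψ χ : V →ₗ[k] V} (hψp : p ≤ p.comap ψ) (hψq : q ≤ q.comap ψ)
    (hχp : p ≤ p.comap χ) (hχq : q ≤ q.comap χ) (h : ∀ v ∈ p, ψ v - χ v ∈ q) :
    quotModMap ψ hψp hψq = quotModMap χ hχp hχq :=
  Submodule.linearMap_qext _ (LinearMap.ext fun v => (Submodule.Quotient.eq _).2 (h v v.2))

theorem quotModMap_id :
    quotModMap (p := p) (q := q) LinearMap.id (fun _ h => h) (fun _ h => h) = 1 :=
  Submodule.linearMap_qext _ rfl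

theorem quotModMap_comp {ψ χ : V →ₗ[k] V} (hψp : p ≤ p.comap ψ) (hψq : q ≤ q.comap ψ)
    (hχp : p ≤ p.comap χ) (hχq : q ≤ q.comap χ) :
    quotModMap (ψ ∘ₗ χ) (fun _ h => hψp (hχp h)) (fun _ h => hψq (hχq h)) =
      quotModMap ψ hψp hψq * quotModMap χ hχp hχq :=
  Submodule.linearMap_qext _ rfl

theorem IsInducedRep.asAlgebraHom_mk {H : Type} [Monoid H] {ρ : Representation k H V}
    {τ : Representation k H (QuotMod k p q)} (hτ : IsInducedRep k ρ p q τ)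
    (hp : IsSubrep k ρ p) (x : MonoidAlgebra k H) (v : p) :
    τ.asAlgebraHom x (Submodule.Quotient.mk v) =
      Submodule.Quotient.mk ⟨ρ.asAlgebraHom x v, hp.asAlgebraHom_mem x v.2⟩ := by
  induction x using MonoidAlgebra.induction_on with
  | of h => simpa using hτ h v _ rfl
  | add x y hx hy =>
    rw [map_add, LinearMap.add_apply, hx, hy, ← Submodule.Quotient.mk_add]
    congr 1
    ext
    simp
  | smul r x hx =>
    rw [map_smul, LinearMap.smul_apply, hx, ← Submodule.Quotient.mk_smul]
    congr 1
    ext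
    simp

end QuotMod

section RadicalFiltration

variable {k : Type} [Field k] {G : Type} [Group G] {N : Subgroup G}
  {T : Type} [AddCommGroup T] [Module k T] {ρT : Representation k N T}

theorem jrad_eq_restrictScalars_jacobson :
    Jrad k G N = (Ring.jacobson (MonoidAlgebra k N)).restrictScalars k := by
  rw [Jrad, Ideal.jacobson_bot]

theorem mapDomainAlgHom_mem_jrad_pow (α : MulAut N) {m : ℕ} {x : MonoidAlgebra k N}
    (hx : x ∈ Jrad k G N ^ m) :
    MonoidAlgebra.mapDomainAlgHom k k α.toMonoidHom x ∈ Jrad k G N ^ m := by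
  rw [jrad_eq_restrictScalars_jacobson] at hx ⊢
  exact (MonoidAlgebra.domCongr k k α).apply_mem_jacobson_pow m hx

theorem IsEquivariant.actSpan_jrad_pow_le_comap {α : MulAut N} {ψ : T →ₗ[k] T}
    (hψ : IsEquivariant k ρT (ρT.comp α.toMonoidHom) ψ) (m : ℕ) :
    actSpan k ρT (Jrad k G N ^ m) ≤ (actSpan k ρT (Jrad k G N ^ m)).comap ψ :=
  actSpan_le_iff.2 fun x hx v => by
    rw [mem_comap, hψ.apply_asAlgebraHom, ← asAlgebraHom_mapDomainAlgHom]
    exact asAlgebraHom_mem_actSpan ρT (mapDomainAlgHom_mem_jrad_pow α hx) _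

variable [N.Normal]

theorem isEquivariant_rho_conjNormal (u : N) :
    IsEquivariant k ρT (ρT.comp (MulAut.conjNormal (u : G)).toMonoidHom) (ρT u) :=
  fun v t => by
    simp only [MonoidHom.comp_apply, ← Module.End.mul_apply, ← map_mul]
    congr 2
    ext
    simp [MulAut.conjNormal_apply]

theorem isSubrep_actSpan_jrad_pow (m : ℕ) : IsSubrep k ρT (actSpan k ρT (Jrad k G N ^ m)) :=
  fun u _ hv => (isEquivariant_rho_conjNormal u).actSpan_jrad_pow_le_comap m hv

end RadicalFiltration

section TwistedLift

variable {k : Type} [Field k] {G : Type} [Group G] {N : Subgroup G} [N.Normal]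
  {L T : Type} [AddCommGroup L] [Module k L] [AddCommGroup T] [Module k T]

def IsTwistedLift (ρL : Representation k G L) (ρT : Representation k N T) (π : T →ₗ[k] L)
    (g : G) (ψ : T →ₗ[k] T) : Prop :=
  IsEquivariant k ρT (ρT.comp (MulAut.conjNormal g).toMonoidHom) ψ ∧
    ∀ t, π (ψ t) = ρL g (π t)

variable {ρL : Representation k G L} {ρT : Representation k N T} {π : T →ₗ[k] L}

theorem isTwistedLift_one : IsTwistedLift ρL ρT π 1 LinearMap.id :=
  ⟨fun u t => by simp, fun t => by simp⟩

theorem IsTwistedLift.comp {g h : G} {ψ χ : T →ₗ[k] T} (hψ : IsTwistedLift ρL ρT π g ψ)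
    (hχ : IsTwistedLift ρL ρT π h χ) : IsTwistedLift ρL ρT π (g * h) (ψ ∘ₗ χ) :=
  ⟨fun u t => by simp [hχ.1 u t, hψ.1 _ (χ t)], fun t => by simp [hψ.2, hχ.2]⟩

theorem isTwistedLift_rho (hπ : IsEquivariant k ρT (ρL.comp N.subtype) π) (u : N) :
    IsTwistedLift ρL ρT π u (ρT u) :=
  ⟨isEquivariant_rho_conjNormal u, hπ u⟩

theorem IsProjectiveCover.exists_isTwistedLift
    (hcov : IsProjectiveCover k ρT (ρL.comp N.subtype) π) (g : G) :
    ∃ ψ, IsTwistedLift ρL ρT π g ψ := by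
  have hf : IsEquivariant k (ρT.comp (MulAut.conjNormal g).toMonoidHom) (ρL.comp N.subtype)
      (ρL g⁻¹ ∘ₗ π) := fun u t => by
    simp [hcov.2.1 _ t, ← Module.End.mul_apply, ← map_mul, MulAut.conjNormal_apply, mul_assoc]
  have hsurj : Function.Surjective (ρL g⁻¹ ∘ₗ π) :=
    (ρL.apply_bijective g⁻¹).surjective.comp hcov.2.2.1
  obtain ⟨ψ, hψ, hπψ⟩ := hcov.1 T L _ _ _ hf hsurj π hcov.2.1
  refine ⟨ψ, hψ, fun t => ?_⟩
  rw [← ρL.inv_apply_eq_iff]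
  exact LinearMap.congr_fun hπψ t

theorem IsTwistedLift.sub_mem_actSpan_succ
    (hcov : IsProjectiveCover k ρT (ρL.comp N.subtype) π) {g : G} {ψ χ : T →ₗ[k] T}
    (hψ : IsTwistedLift ρL ρT π g ψ) (hχ : IsTwistedLift ρL ρT π g χ)
    (n : ℕ) {v : T} (hv : v ∈ actSpan k ρT (Jrad k G N ^ n)) :
    ψ v - χ v ∈ actSpan k ρT (Jrad k G N ^ (n + 1)) := by
  have hker : ∀ t, ψ t - χ t ∈ actSpan k ρT (Jrad k G N) := fun t => by
    rw [jrad_eq_restrictScalars_jacobson]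
    exact hcov.ker_le_actSpan_jacobson (by simp [hψ.2, hχ.2])
  refine (actSpan_le_iff (S := (actSpan k ρT (Jrad k G N ^ (n + 1))).comap (ψ - χ))).2
    (fun x hx t => ?_) hv
  rw [mem_comap, LinearMap.sub_apply, hψ.1.apply_asAlgebraHom, hχ.1.apply_asAlgebraHom,
    ← map_sub, ← asAlgebraHom_mapDomainAlgHom, pow_succ]
  exact asAlgebraHom_mem_actSpan_mul (mapDomainAlgHom_mem_jrad_pow _ hx) (hker t)

def filtrationRep (hcov : IsProjectiveCover k ρT (ρL.comp N.subtype) π) (n : ℕ) :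
    Representation k G
      (QuotMod k (actSpan k ρT (Jrad k G N ^ n)) (actSpan k ρT (Jrad k G N ^ (n + 1)))) where
  toFun g := quotModMap (hcov.exists_isTwistedLift g).choose
    ((hcov.exists_isTwistedLift g).choose_spec.1.actSpan_jrad_pow_le_comap n)
    ((hcov.exists_isTwistedLift g).choose_spec.1.actSpan_jrad_pow_le_comap (n + 1))
  map_one' := (quotModMap_eq _ _ _ _ fun _ hv =>
    (hcov.exists_isTwistedLift 1).choose_spec.sub_mem_actSpan_succ hcov isTwistedLift_one n
      hv).trans quotModMap_id
  map_mul' g h := (quotModMap_eq _ _ _ _ fun _ hv =>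
    (hcov.exists_isTwistedLift (g * h)).choose_spec.sub_mem_actSpan_succ hcov
      ((hcov.exists_isTwistedLift g).choose_spec.comp
        (hcov.exists_isTwistedLift h).choose_spec) n hv).trans (quotModMap_comp _ _ _ _)

theorem IsTwistedLift.filtrationRep_apply
    (hcov : IsProjectiveCover k ρT (ρL.comp N.subtype) π) {g : G} {ψ : T →ₗ[k] T}
    (hψ : IsTwistedLift ρL ρT π g ψ) (n : ℕ) :
    filtrationRep hcov n g = quotModMap ψ (hψ.1.actSpan_jrad_pow_le_comap n)
      (hψ.1.actSpan_jrad_pow_le_comap (n + 1)) :=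
  have hg := (hcov.exists_isTwistedLift g).choose_spec
  quotModMap_eq (hg.1.actSpan_jrad_pow_le_comap n) (hg.1.actSpan_jrad_pow_le_comap (n + 1)) _ _
    fun _ hv => hg.sub_mem_actSpan_succ hcov hψ n hv

theorem isInducedRep_filtrationRep (hcov : IsProjectiveCover k ρT (ρL.comp N.subtype) π)
    (n : ℕ) : IsInducedRep k ρT _ _ ((filtrationRep hcov n).comp N.subtype) :=
  fun u v w hw => by
    rw [MonoidHom.comp_apply, N.subtype_apply,
      (isTwistedLift_rho hcov.2.1 u).filtrationRep_apply hcov n, quotModMap_mk]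
    exact congrArg _ (Subtype.ext hw.symm)

theorem filtrationRep_asAlgebraHom_incl_eq_zero
    (hcov : IsProjectiveCover k ρT (ρL.comp N.subtype) π) (n : ℕ)
    {j : MonoidAlgebra k N} (hj : j ∈ Jrad k G N) :
    (filtrationRep hcov n).asAlgebraHom (incl k G N j) = 0 := by
  refine Submodule.linearMap_qext _ (LinearMap.ext fun v => ?_)
  rw [LinearMap.comp_apply, mkQ_apply, incl, asAlgebraHom_mapDomainAlgHom,
    (isInducedRep_filtrationRep hcov n).asAlgebraHom_mk (isSubrep_actSpan_jrad_pow n),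
    LinearMap.zero_comp, LinearMap.zero_apply, Submodule.Quotient.mk_eq_zero]
  exact pow_succ' (Jrad k G N) n ▸ asAlgebraHom_mem_actSpan_mul hj v.2

theorem exists_filtrationRep_zero_equiv (hirr : IsIrreducibleRep k (ρL.comp N.subtype))
    (hcov : IsProjectiveCover k ρT (ρL.comp N.subtype) π) :
    ∃ e : QuotMod k (actSpan k ρT (Jrad k G N ^ 0))
        (actSpan k ρT (Jrad k G N ^ (0 + 1))) ≃ₗ[k] L,
      ∀ g w, e (filtrationRep hcov 0 g w) = ρL g (e w) := by
  have htop : actSpan k ρT (Jrad k G N ^ 0) = ⊤ := by rw [pow_zero, actSpan_one]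
  have hker : actSpan k ρT (Jrad k G N ^ (0 + 1)) = LinearMap.ker π := by
    rw [zero_add, pow_one, jrad_eq_restrictScalars_jacobson]
    refine le_antisymm (actSpan_le_iff.2 fun x hx t => ?_) hcov.ker_le_actSpan_jacobson
    rw [LinearMap.mem_ker, hcov.2.1.apply_asAlgebraHom,
      hirr.asAlgebraHom_eq_zero_of_mem_jacobson hx, LinearMap.zero_apply]
  let f := π ∘ₗ (actSpan k ρT (Jrad k G N ^ 0)).subtype
  have hf : Function.Surjective f := fun y =>
    let ⟨t, ht⟩ := hcov.2.2.1 y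
    ⟨⟨t, htop ▸ mem_top⟩, ht⟩
  have hkerf : (actSpan k ρT (Jrad k G N ^ (0 + 1))).comap
      (actSpan k ρT (Jrad k G N ^ 0)).subtype = LinearMap.ker f := by
    rw [hker, LinearMap.ker_comp]
  refine ⟨(Submodule.quotEquivOfEq _ _ hkerf).trans (f.quotKerEquivOfSurjective hf),
    fun g w => ?_⟩
  obtain ⟨v, rfl⟩ := Submodule.Quotient.mk_surjective _ w
  obtain ⟨ψ, hψ⟩ := hcov.exists_isTwistedLift g
  rw [hψ.filtrationRep_apply hcov, quotModMap_mk]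
  simpa [f] using hψ.2 v

end TwistedLift

section TwoSidedIdeal

variable {k : Type} [Field k] {G : Type} [Group G] {N : Subgroup G}
  {V : Type} [AddCommGroup V] [Module k V]

theorem asAlgebraHom_eq_zero_of_mem_igen {σ : Representation k G V}
    (h : ∀ j ∈ Jrad k G N, σ.asAlgebraHom (incl k G N j) = 0) {x : MonoidAlgebra k G}
    (hx : x ∈ Igen k G N) : σ.asAlgebraHom x = 0 := by
  let K : Submodule k (MonoidAlgebra k G) := LinearMap.ker σ.asAlgebraHom.toLinearMap
  have hK : ∀ {a b}, a ∈ K ∨ b ∈ K → a * b ∈ K := by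
    rintro a b (h | h) <;> simp_all [K]
  have hR : Rimg k G N ≤ K := Submodule.map_le_iff_le_comap.2 fun j hj => h j hj
  exact Submodule.mul_le.2 (fun a ha b _ => hK (.inl (Submodule.mul_le.2
    (fun _ _ _ hr => hK (.inr (hR hr))) ha))) hx

end TwoSidedIdeal

theorem stmt5 (L T : Type)
    [AddCommGroup L] [Module k L]
    [AddCommGroup T] [Module k T]
    (ρL : Representation k G L)
    (hirr : IsIrreducibleRep k (ρL.comp N.subtype : Representation k ↥N L))
    (ρT : Representation k ↥N T) (π : T →ₗ[k] L)
    (hcov : IsProjectiveCover k ρT (ρL.comp N.subtype : Representation k ↥N L) π)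
    (n : ℕ) :
    ∃ σ : Representation k G
        (QuotMod k (actSpan k ρT (Jrad k G N ^ n)) (actSpan k ρT (Jrad k G N ^ (n + 1)))),
      (∀ (c : MonoidAlgebra k ↥N) (v w : ↥(actSpan k ρT (Jrad k G N ^ n))),
          (w : T) = ρT.asAlgebraHom c (v : T) →
          σ.asAlgebraHom (incl k G N c) (Submodule.Quotient.mk v) =
            Submodule.Quotient.mk w) ∧
      (∀ x ∈ Igen k G N, σ.asAlgebraHom x = 0) ∧
      (n = 0 →
        ∃ e : QuotMod k (actSpan k ρT (Jrad k G N ^ n))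
              (actSpan k ρT (Jrad k G N ^ (n + 1))) ≃ₗ[k] L,
          ∀ (g : G)
              (w : QuotMod k (actSpan k ρT (Jrad k G N ^ n))
                (actSpan k ρT (Jrad k G N ^ (n + 1)))),
            e (σ g w) = ρL g (e w)) := by
  refine ⟨filtrationRep hcov n, fun c v w hw => ?_, fun _ => asAlgebraHom_eq_zero_of_mem_igen
    fun _ => filtrationRep_asAlgebraHom_incl_eq_zero hcov n, ?_⟩
  · rw [incl, asAlgebraHom_mapDomainAlgHom,
      (isInducedRep_filtrationRep hcov n).asAlgebraHom_mk (isSubrep_actSpan_jrad_pow n)]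
    exact congrArg _ (Subtype.ext hw.symm)
  · rintro rfl
    exact exists_filtrationRep_zero_equiv hirr hcov
end
end
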